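/- arXiv:2306.06050 — 5 statements merged into one kernel-verified Lean document; each statement's English description precedes it below -/
import Mathlib

section
/- Let J ⊆ {1,…,n}, let a ∈ ℝⁿ, b ∈ ℝ with b = ⌊b⌋ + f₀ and 0 < f₀ < 1, and for i ∈ J write a_i = ⌊a_i⌋ + f_i with 0 ≤ f_i < 1. Suppose x ∈ ℝⁿ, x ≥ 0, satisfies aᵀx = b and x_i ∈ ℤ for all i ∈ J. Then x satisfies the Gomory mixed-integer inequality: ∑_{i ∈ J, f_i ≤ f₀} (f_i/f₀) x_i + ∑_{i ∈ J, f_i > f₀} ((1-f_i)/(1-f₀)) x_i + ∑_{i ∉ J, a_i ≥ 0} (a_i/f₀) x_i − ∑_{i ∉ J, a_i < 0} (a_i/(1-f₀)) x_i ≥ 1. -/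
open Finset in
theorem gmi_inequality_valid (n : ℕ) (J : Finset (Fin n)) (a f : Fin n → ℝ)
    (b f0 : ℝ) (hb : b = ⌊b⌋ + f0) (hf0 : 0 < f0) (hf01 : f0 < 1)
    (hfi : ∀ i ∈ J, a i = ⌊a i⌋ + f i) (hfi0 : ∀ i ∈ J, 0 ≤ f i) (hfi1 : ∀ i ∈ J, f i < 1)
    (x : Fin n → ℝ) (hx : ∀ i, 0 ≤ x i)
    (heq : ∑ i, a i * x i = b)
    (hxint : ∀ i ∈ J, ∃ z : ℤ, x i = z) :
    (∑ i ∈ J.filter (fun i => f i ≤ f0), (f i / f0) * x i)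
      + (∑ i ∈ J.filter (fun i => f0 < f i), ((1 - f i) / (1 - f0)) * x i)
      + (∑ i ∈ Jᶜ.filter (fun i => 0 ≤ a i), (a i / f0) * x i)
      - (∑ i ∈ Jᶜ.filter (fun i => a i < 0), (a i / (1 - f0)) * x i) ≥ 1 := by
  classical
  have hxz : ∀ i ∈ J, x i = ((⌊x i⌋ : ℤ) : ℝ) := by
    intro i hi
    obtain ⟨z, hz⟩ := hxint i hi
    rw [hz]; simp
  set J1 := J.filter (fun i => f i ≤ f0) with hJ1
  set J2 := J.filter (fun i => f0 < f i) with hJ2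
  set C1 := Jᶜ.filter (fun i => 0 ≤ a i) with hC1
  set C2 := Jᶜ.filter (fun i => a i < 0) with hC2
  have hJ2' : J.filter (fun i => ¬ f i ≤ f0) = J2 := by
    rw [hJ2]; apply Finset.filter_congr; intro i _; simp [not_le]
  have hC2' : Jᶜ.filter (fun i => ¬ 0 ≤ a i) = C2 := by
    rw [hC2]; apply Finset.filter_congr; intro i _; simp [not_le]
  set P := (∑ i ∈ J1, f i * x i) + ∑ i ∈ C1, a i * x i with hPdef
  set N := (∑ i ∈ J2, (1 - f i) * x i) - ∑ i ∈ C2, a i * x i with hNdef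
  have hP0 : 0 ≤ P := by
    apply add_nonneg
    · exact Finset.sum_nonneg fun i hi => mul_nonneg (hfi0 i (Finset.mem_filter.mp hi).1) (hx i)
    · exact Finset.sum_nonneg fun i hi => mul_nonneg (Finset.mem_filter.mp hi).2 (hx i)
  have hN0 : 0 ≤ N := by
    rw [hNdef, sub_nonneg]
    calc ∑ i ∈ C2, a i * x i ≤ 0 := Finset.sum_nonpos fun i hi =>
            mul_nonpos_of_nonpos_of_nonneg (le_of_lt (Finset.mem_filter.mp hi).2) (hx i)
      _ ≤ ∑ i ∈ J2, (1 - f i) * x i := Finset.sum_nonneg fun i hi =>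
            mul_nonneg (by linarith [hfi1 i (Finset.mem_filter.mp hi).1]) (hx i)
  set M : ℤ := (∑ i ∈ J, ⌊a i⌋ * ⌊x i⌋) - ⌊b⌋ + ∑ i ∈ J2, ⌊x i⌋ with hMdef
  -- key equation
  have e1 : (∑ i ∈ J, a i * x i) + ∑ i ∈ Jᶜ, a i * x i = b := by
    rw [Finset.sum_add_sum_compl]; exact heq
  have e2 : ∑ i ∈ J, a i * x i = (∑ i ∈ J, (⌊a i⌋ : ℝ) * x i) + ∑ i ∈ J, f i * x i := by
    rw [← Finset.sum_add_distrib]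
    exact Finset.sum_congr rfl fun i hi => by linear_combination (x i) * (hfi i hi)
  have e3 : ∑ i ∈ J, f i * x i = (∑ i ∈ J1, f i * x i) + ∑ i ∈ J2, f i * x i := by
    rw [← hJ2', hJ1]; exact (Finset.sum_filter_add_sum_filter_not J _ _).symm
  have e4 : ∑ i ∈ Jᶜ, a i * x i = (∑ i ∈ C1, a i * x i) + ∑ i ∈ C2, a i * x i := by
    rw [← hC2', hC1]; exact (Finset.sum_filter_add_sum_filter_not Jᶜ _ _).symm
  have e5 : ∑ i ∈ J, (⌊a i⌋ : ℝ) * x i = ∑ i ∈ J, (⌊a i⌋ : ℝ) * (⌊x i⌋ : ℝ) := by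
    exact Finset.sum_congr rfl fun i hi => by linear_combination ((⌊a i⌋ : ℝ)) * hxz i hi
  have e6 : ∑ i ∈ J2, f i * x i = (∑ i ∈ J2, x i) - ∑ i ∈ J2, (1 - f i) * x i := by
    rw [← Finset.sum_sub_distrib]
    exact Finset.sum_congr rfl fun i _ => by ring
  have e7 : ∑ i ∈ J2, x i = ∑ i ∈ J2, (⌊x i⌋ : ℝ) := by
    exact Finset.sum_congr rfl fun i hi => hxz i (Finset.mem_filter.mp hi).1
  have hMc : (M : ℝ) = (∑ i ∈ J, (⌊a i⌋ : ℝ) * (⌊x i⌋ : ℝ)) - (⌊b⌋ : ℝ)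
      + ∑ i ∈ J2, (⌊x i⌋ : ℝ) := by
    rw [hMdef]; push_cast; ring
  have key : P - N = f0 - (M : ℝ) := by
    rw [hPdef, hNdef]
    linarith [e1, e2, e3, e4, e5, e6, e7, hMc, hb]
  -- rewrite goal
  have s1 : ∑ i ∈ J1, (f i / f0) * x i = (∑ i ∈ J1, f i * x i) / f0 := by
    rw [Finset.sum_div]; exact Finset.sum_congr rfl fun i _ => div_mul_eq_mul_div _ _ _
  have s2 : ∑ i ∈ J2, ((1 - f i) / (1 - f0)) * x i = (∑ i ∈ J2, (1 - f i) * x i) / (1 - f0) := by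
    rw [Finset.sum_div]; exact Finset.sum_congr rfl fun i _ => div_mul_eq_mul_div _ _ _
  have s3 : ∑ i ∈ C1, (a i / f0) * x i = (∑ i ∈ C1, a i * x i) / f0 := by
    rw [Finset.sum_div]; exact Finset.sum_congr rfl fun i _ => div_mul_eq_mul_div _ _ _
  have s4 : ∑ i ∈ C2, (a i / (1 - f0)) * x i = (∑ i ∈ C2, a i * x i) / (1 - f0) := by
    rw [Finset.sum_div]; exact Finset.sum_congr rfl fun i _ => div_mul_eq_mul_div _ _ _
  rw [s1, s2, s3, s4]
  have hrw : (∑ i ∈ J1, f i * x i) / f0 + (∑ i ∈ J2, (1 - f i) * x i) / (1 - f0)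
      + (∑ i ∈ C1, a i * x i) / f0 - (∑ i ∈ C2, a i * x i) / (1 - f0)
      = P / f0 + N / (1 - f0) := by
    rw [hPdef, hNdef]; ring
  rw [hrw]
  have h1f0 : (0:ℝ) < 1 - f0 := by linarith
  rcases le_or_gt M 0 with hM0 | hM1
  · have hMr : (M : ℝ) ≤ 0 := by exact_mod_cast hM0
    have hPf : f0 ≤ P := by linarith
    have h1 : 1 ≤ P / f0 := (one_le_div hf0).mpr hPf
    have h2 : 0 ≤ N / (1 - f0) := div_nonneg hN0 (le_of_lt h1f0)
    linarith
  · have hMr : (1:ℝ) ≤ (M : ℝ) := by exact_mod_cast hM1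
    have hNf : 1 - f0 ≤ N := by linarith
    have h1 : 1 ≤ N / (1 - f0) := (one_le_div h1f0).mpr hNf
    have h2 : 0 ≤ P / f0 := div_nonneg hP0 (le_of_lt hf0)
    linarith
end

section
/- Let J ⊆ {1,…,n}, a ∈ ℝⁿ, b ∈ ℝ with fractional part f₀ = b − ⌊b⌋ ∈ (0,1), and suppose x ≥ 0 satisfies aᵀx = b with x_i ∈ ℤ for i ∈ J. Writing a_i = ⌊a_i⌋ + f_i for i ∈ J, the quantity ∑_{i ∈ J, f_i ≤ f₀} f_i x_i + ∑_{i ∈ J, f_i > f₀} (f_i − 1) x_i + ∑_{i ∉ J} a_i x_i equals k + f₀ for some integer k. -/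
open Finset in
theorem gmi_fractional_identity (n : ℕ) (J : Finset (Fin n)) (a f : Fin n → ℝ)
    (b f0 : ℝ) (hb : f0 = b - ⌊b⌋) (hf0 : 0 < f0) (hf01 : f0 < 1)
    (hfi : ∀ i ∈ J, f i = a i - ⌊a i⌋)
    (x : Fin n → ℝ) (hx : ∀ i, 0 ≤ x i)
    (heq : ∑ i, a i * x i = b)
    (hxint : ∀ i ∈ J, ∃ z : ℤ, x i = z) :
    ∃ k : ℤ,
      (∑ i ∈ J.filter (fun i => f i ≤ f0), f i * x i)
        + (∑ i ∈ J.filter (fun i => f0 < f i), (f i - 1) * x i)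
        + (∑ i ∈ Jᶜ, a i * x i) = k + f0 := by
  classical
  set z : Fin n → ℤ := fun i => if h : i ∈ J then (hxint i h).choose else 0 with hz
  have hzx : ∀ i ∈ J, x i = (z i : ℝ) := by
    intro i hi
    simp only [hz, dif_pos hi]
    exact (hxint i hi).choose_spec
  refine ⟨⌊b⌋ - ∑ i ∈ J, ⌊a i⌋ * z i - ∑ i ∈ J.filter (fun i => f0 < f i), z i, ?_⟩
  have hsplit : (∑ i ∈ J.filter (fun i => f i ≤ f0), f i * x i)
      + (∑ i ∈ J.filter (fun i => f0 < f i), (f i - 1) * x i)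
      = (∑ i ∈ J, f i * x i) - ∑ i ∈ J.filter (fun i => f0 < f i), x i := by
    have h1 : J.filter (fun i => f0 < f i) = J.filter (fun i => ¬ f i ≤ f0) := by
      apply Finset.filter_congr; intro i _; simp [not_le]
    rw [h1]
    rw [← Finset.sum_filter_add_sum_filter_not J (fun i => f i ≤ f0) (fun i => f i * x i)]
    have : ∀ i ∈ J.filter (fun i => ¬ f i ≤ f0), (f i - 1) * x i = f i * x i - x i := by
      intro i _; ring
    rw [Finset.sum_congr rfl this, Finset.sum_sub_distrib]
    ring
  rw [hsplit]
  have hfsum : (∑ i ∈ J, f i * x i) = (∑ i ∈ J, a i * x i) - ∑ i ∈ J, (⌊a i⌋ : ℝ) * x i := by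
    rw [← Finset.sum_sub_distrib]
    apply Finset.sum_congr rfl
    intro i hi; rw [hfi i hi]; ring
  have hab : (∑ i ∈ J, a i * x i) = b - ∑ i ∈ Jᶜ, a i * x i := by
    rw [← heq, ← Finset.sum_add_sum_compl J (fun i => a i * x i)]; ring
  have h2 : ∑ i ∈ J, (⌊a i⌋ : ℝ) * x i = ((∑ i ∈ J, ⌊a i⌋ * z i : ℤ) : ℝ) := by
    push_cast
    apply Finset.sum_congr rfl
    intro i hi; rw [hzx i hi]
  have h3 : ∑ i ∈ J.filter (fun i => f0 < f i), x i
      = ((∑ i ∈ J.filter (fun i => f0 < f i), z i : ℤ) : ℝ) := by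
    push_cast
    apply Finset.sum_congr rfl
    intro i hi; exact hzx i (Finset.mem_filter.mp hi).1
  rw [hfsum, hab, h2, h3, hb]
  push_cast
  ring
end

section
/- Under the hypotheses of the GMI derivation (x ≥ 0, aᵀx = b, x integral on J, f₀ = b − ⌊b⌋ ∈ (0,1), f_i = a_i − ⌊a_i⌋), if the integer k in the identity ∑_{i∈J, f_i≤f₀} f_i x_i + ∑_{i∈J, f_i>f₀}(f_i−1)x_i + ∑_{i∉J} a_i x_i = k + f₀ satisfies k ≤ −1, then −∑_{i∈J, f_i≤f₀} (f_i/(1−f₀)) x_i + ∑_{i∈J, f_i>f₀} ((1−f_i)/(1−f₀)) x_i − ∑_{i∉J} (a_i/(1−f₀)) x_i ≥ 1. -/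
open Finset in
theorem gmi_branch_k_neg (n : ℕ) (J : Finset (Fin n)) (a f : Fin n → ℝ)
    (b f0 : ℝ) (hb : f0 = b - ⌊b⌋) (hf0 : 0 < f0) (hf01 : f0 < 1)
    (hfi : ∀ i ∈ J, f i = a i - ⌊a i⌋)
    (x : Fin n → ℝ) (hx : ∀ i, 0 ≤ x i)
    (heq : ∑ i, a i * x i = b)
    (hxint : ∀ i ∈ J, ∃ z : ℤ, x i = z)
    (k : ℤ) (hk : k ≤ -1)
    (hid : (∑ i ∈ J.filter (fun i => f i ≤ f0), f i * x i)
        + (∑ i ∈ J.filter (fun i => f0 < f i), (f i - 1) * x i)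
        + (∑ i ∈ Jᶜ, a i * x i) = k + f0) :
    -(∑ i ∈ J.filter (fun i => f i ≤ f0), (f i / (1 - f0)) * x i)
      + (∑ i ∈ J.filter (fun i => f0 < f i), ((1 - f i) / (1 - f0)) * x i)
      - (∑ i ∈ Jᶜ, (a i / (1 - f0)) * x i) ≥ 1 := by
  have h1 : (0:ℝ) < 1 - f0 := by linarith
  have hkr : (k:ℝ) ≤ -1 := by exact_mod_cast hk
  simp only [div_mul_eq_mul_div, ← Finset.sum_div]
  rw [ge_iff_le, ← sub_nonneg]
  have h2 : ∑ i ∈ J.filter (fun i => f0 < f i), (1 - f i) * x i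
      = -∑ i ∈ J.filter (fun i => f0 < f i), (f i - 1) * x i := by
    rw [← Finset.sum_neg_distrib]; apply Finset.sum_congr rfl; intros; ring
  rw [h2]
  set S1 := ∑ i ∈ J.filter (fun i => f i ≤ f0), f i * x i
  set S2 := ∑ i ∈ J.filter (fun i => f0 < f i), (f i - 1) * x i
  set S3 := ∑ i ∈ Jᶜ, a i * x i
  have key : -(S1/(1-f0)) + (-S2)/(1-f0) - S3/(1-f0) = (-(S1+S2+S3))/(1-f0) := by
    field_simp; ring
  rw [key, hid, sub_nonneg, le_div_iff₀ h1]
  linarith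
end

section
/- Under the hypotheses of the GMI derivation, if the integer k in the identity ∑_{i∈J, f_i≤f₀} f_i x_i + ∑_{i∈J, f_i>f₀}(f_i−1)x_i + ∑_{i∉J} a_i x_i = k + f₀ satisfies k ≥ 0, then ∑_{i∈J, f_i≤f₀} (f_i/f₀) x_i − ∑_{i∈J, f_i>f₀} ((1−f_i)/f₀) x_i + ∑_{i∉J} (a_i/f₀) x_i ≥ 1. -/
open Finset in
theorem gmi_branch_k_nonneg (n : ℕ) (J : Finset (Fin n)) (a f : Fin n → ℝ)
    (b f0 : ℝ) (hb : f0 = b - ⌊b⌋) (hf0 : 0 < f0) (hf01 : f0 < 1)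
    (hfi : ∀ i ∈ J, f i = a i - ⌊a i⌋)
    (x : Fin n → ℝ) (hx : ∀ i, 0 ≤ x i)
    (heq : ∑ i, a i * x i = b)
    (hxint : ∀ i ∈ J, ∃ z : ℤ, x i = z)
    (k : ℤ) (hk : 0 ≤ k)
    (hid : (∑ i ∈ J.filter (fun i => f i ≤ f0), f i * x i)
        + (∑ i ∈ J.filter (fun i => f0 < f i), (f i - 1) * x i)
        + (∑ i ∈ Jᶜ, a i * x i) = k + f0) :
    (∑ i ∈ J.filter (fun i => f i ≤ f0), (f i / f0) * x i)
      - (∑ i ∈ J.filter (fun i => f0 < f i), ((1 - f i) / f0) * x i)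
      + (∑ i ∈ Jᶜ, (a i / f0) * x i) ≥ 1 := by
  have hL : (∑ i ∈ J.filter (fun i => f i ≤ f0), (f i / f0) * x i)
      - (∑ i ∈ J.filter (fun i => f0 < f i), ((1 - f i) / f0) * x i)
      + (∑ i ∈ Jᶜ, (a i / f0) * x i)
      = ((∑ i ∈ J.filter (fun i => f i ≤ f0), f i * x i)
        + (∑ i ∈ J.filter (fun i => f0 < f i), (f i - 1) * x i)
        + (∑ i ∈ Jᶜ, a i * x i)) / f0 := by
    rw [add_div, add_div, sub_eq_add_neg]
    congr 1
    · congr 1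
      · rw [Finset.sum_div]; exact Finset.sum_congr rfl fun i _ => by ring
      · rw [Finset.sum_div, ← Finset.sum_neg_distrib]
        exact Finset.sum_congr rfl fun i _ => by ring
    · rw [Finset.sum_div]; exact Finset.sum_congr rfl fun i _ => by ring
  rw [hL, hid, ge_iff_le, le_div_iff₀ hf0, one_mul]
  have : (0:ℝ) ≤ k := by exact_mod_cast hk
  linarith
end

section
/- Let a ∈ ℝⁿ, b ∈ ℝ with f₀ = b − ⌊b⌋ ∈ (0,1), and suppose x ≥ 0 satisfies aᵀx = b. If additionally ∑_{i=1}^n a_i x_i − ⌊b⌋ ∈ f₀ + ℤ, then ∑_{a_i ≥ 0} (a_i/f₀) x_i − ∑_{a_i < 0} (a_i/(1−f₀)) x_i ≥ 1. -/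
open Finset in
theorem weak_gmi_valid (n : ℕ) (a : Fin n → ℝ) (b f0 : ℝ)
    (hb : f0 = b - ⌊b⌋) (hf0 : 0 < f0) (hf01 : f0 < 1)
    (x : Fin n → ℝ) (hx : ∀ i, 0 ≤ x i)
    (heq : ∑ i, a i * x i = b)
    (hmem : ∃ k : ℤ, (∑ i, a i * x i) - ⌊b⌋ = f0 + k) :
    (∑ i ∈ Finset.univ.filter (fun i => 0 ≤ a i), (a i / f0) * x i)
      - (∑ i ∈ Finset.univ.filter (fun i => a i < 0), (a i / (1 - f0)) * x i) ≥ 1 := by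
  set P := ∑ i ∈ Finset.univ.filter (fun i => 0 ≤ a i), a i * x i with hP
  set N := ∑ i ∈ Finset.univ.filter (fun i => a i < 0), a i * x i with hN
  have hPN : P + N = b := by
    rw [hP, hN, ← heq]
    rw [← Finset.sum_filter_add_sum_filter_not Finset.univ (fun i => 0 ≤ a i)]
    congr 1
    apply Finset.sum_congr _ (fun _ _ => rfl)
    ext i; simp [not_le]
  have hPpos : 0 ≤ P := Finset.sum_nonneg fun i hi => by
    have := (Finset.mem_filter.mp hi).2
    exact mul_nonneg this (hx i)
  have hNneg : N ≤ 0 := Finset.sum_nonpos fun i hi => by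
    have := (Finset.mem_filter.mp hi).2
    exact mul_nonpos_of_nonpos_of_nonneg this.le (hx i)
  have h1 : (∑ i ∈ Finset.univ.filter (fun i => 0 ≤ a i), (a i / f0) * x i) = P / f0 := by
    rw [hP, Finset.sum_div]
    exact Finset.sum_congr rfl fun i _ => by ring
  have h2 : (∑ i ∈ Finset.univ.filter (fun i => a i < 0), (a i / (1 - f0)) * x i)
      = N / (1 - f0) := by
    rw [hN, Finset.sum_div]
    exact Finset.sum_congr rfl fun i _ => by ring
  rw [h1, h2]
  have hf01' : 0 < 1 - f0 := by linarith
  have hbfloor : b = ⌊b⌋ + f0 := by linarith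
  rcases le_or_gt 0 (⌊b⌋ : ℝ) with h | h
  · have hPf : f0 ≤ P := by nlinarith
    have : 1 ≤ P / f0 := (one_le_div hf0).mpr hPf
    have : N / (1 - f0) ≤ 0 := div_nonpos_of_nonpos_of_nonneg hNneg hf01'.le
    linarith
  · have h' : (⌊b⌋ : ℝ) ≤ -1 := by
      have : ⌊b⌋ < 0 := by exact_mod_cast (by exact_mod_cast h : (⌊b⌋:ℝ) < 0)
      have : ⌊b⌋ ≤ -1 := by omega
      exact_mod_cast this
    have hNf : N ≤ -(1 - f0) := by nlinarith
    have : 1 ≤ -(N / (1 - f0)) := by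
      rw [← neg_div]
      exact (one_le_div hf01').mpr (by linarith)
    have : 0 ≤ P / f0 := div_nonneg hPpos hf0.le
    linarith
end
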